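/- arXiv:1503.01740 — 4 statements merged into one kernel-verified Lean document; each statement's English description precedes it below -/
import Mathlib

section
/- The ring of D_k-invariant real polynomial functions on ℂ ≅ ℝ², where D_k is generated by z ↦ conj(z) and z ↦ e^{2πi/k}·conj(z), contains the polynomials δ₁(z) = |z|² and δ₂(z) = Re(z^k), and every element of this invariant ring is a polynomial in δ₁ and δ₂. -/
open Complex

/-- p : ℂ → ℝ is a real polynomial function on ℂ ≅ ℝ². -/
def IsRealPolyFun (p : ℂ → ℝ) : Prop :=
  ∃ P : MvPolynomial (Fin 2) ℝ, ∀ z : ℂ, p z = MvPolynomial.eval ![z.re, z.im] P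

/-- p is invariant under the dihedral group D_k generated by z ↦ conj z and
z ↦ e^{2πi/k}·conj z. -/
def IsDihedralInvariant (k : ℕ) (p : ℂ → ℝ) : Prop :=
  (∀ z : ℂ, p ((starRingEnd ℂ) z) = p z) ∧
  (∀ z : ℂ, p (Complex.exp (2 * Real.pi * Complex.I / k) * (starRingEnd ℂ) z) = p z)

/-!
Averaging over `D_k` projects real polynomial functions onto the invariant ones. A real
polynomial function is a real combination of functions `Re (c * z ^ a * conj z ^ b)`, and
averaging over the rotations `z ↦ ζ ^ j * z` and the reflection `z ↦ conj z` sends such a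
function to `0` unless `a ≡ b [MOD k]`, and to `Re c * Re (z ^ a * conj z ^ b)` otherwise
(character orthogonality for the cyclic group of `k`-th roots of unity). If `a = b + k * q`,
then `Re (z ^ a * conj z ^ b) = |z| ^ (2 * b) * Re ((z ^ k) ^ q)`, and `Re (w ^ q)` is a polynomial
in `Re w` and `|w| ^ 2` by the recursion
`Re (w ^ (q + 2)) = 2 * Re w * Re (w ^ (q + 1)) - |w| ^ 2 * Re (w ^ q)`.
-/

open MvPolynomial ComplexConjugate Finset

section PolynomialFunctions

variable {α R : Type*} [CommSemiring R]

lemma aeval_pi_apply {σ : Type*} (f : σ → α → R) (Q : MvPolynomial σ R) (x : α) :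
    aeval f Q x = eval (fun i => f i x) Q := by
  rw [← aeval_eq_eval]
  exact comp_aeval_apply f (Pi.evalAlgHom R (fun _ => R) x) Q

lemma mem_range_aeval_pair_iff (f g p : α → R) :
    p ∈ (aeval (R := R) ![f, g]).range ↔
      ∃ Q : MvPolynomial (Fin 2) R, ∀ x, p x = eval ![f x, g x] Q := by
  have hfg (x : α) : (fun i => ![f, g] i x) = ![f x, g x] := by
    ext i; fin_cases i <;> rfl
  simp only [AlgHom.mem_range, funext_iff, aeval_pi_apply, hfg, eq_comm]

end PolynomialFunctions

lemma isRealPolyFun_iff_mem_range (p : ℂ → ℝ) :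
    IsRealPolyFun p ↔ p ∈ (aeval (R := ℝ) ![re, im]).range :=
  (mem_range_aeval_pair_iff _ _ _).symm

lemma re_pow_add_two (w : ℂ) (n : ℕ) :
    (w ^ (n + 2)).re = 2 * w.re * (w ^ (n + 1)).re - normSq w * (w ^ n).re := by
  simp only [pow_succ, mul_re, mul_im, normSq_apply]
  ring

lemma re_pow_mem {α : Type*} {A : Subalgebra ℝ (α → ℝ)} {g : α → ℂ}
    (hre : (fun x => (g x).re) ∈ A) (hnormSq : (fun x => normSq (g x)) ∈ A) (n : ℕ) :
    (fun x => (g x ^ n).re) ∈ A := by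
  induction n using Nat.twoStepInduction with
  | zero =>
    simp only [pow_zero, one_re]
    exact A.one_mem
  | one => simpa using hre
  | more n hn hn1 =>
    have hrec : (fun x => (g x ^ (n + 2)).re) =
        (2 : ℝ) • ((fun x => (g x).re) * fun x => (g x ^ (n + 1)).re) -
          (fun x => normSq (g x)) * fun x => (g x ^ n).re := by
      ext x
      simp [re_pow_add_two, mul_assoc]
    rw [hrec]
    exact A.sub_mem (A.smul_mem (A.mul_mem hre hn1) 2) (A.mul_mem hnormSq hn)

def reMonomial (c : ℂ) (a b : ℕ) (z : ℂ) : ℝ :=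
  (c * (z ^ a * conj z ^ b)).re

def reMonomials : Set (ℂ → ℝ) :=
  Set.range fun t : ℂ × ℕ × ℕ => reMonomial t.1 t.2.1 t.2.2

lemma IsRealPolyFun.exists_re_eval {p : ℂ → ℝ} (hp : IsRealPolyFun p) :
    ∃ F : MvPolynomial (Fin 2) ℂ, ∀ z, p z = (eval ![z, conj z] F).re := by
  obtain ⟨P, hP⟩ := hp
  let g : Fin 2 → MvPolynomial (Fin 2) ℂ := ![C (1 / 2) * (X 0 + X 1), C (I / 2) * (X 1 - X 0)]
  refine ⟨aeval (R := ℝ) g P, fun z => ?_⟩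
  have hg : (fun i => eval ![z, conj z] (g i)) = algebraMap ℝ ℂ ∘ ![z.re, z.im] := by
    ext i
    fin_cases i
    · simp [g, add_conj]
    · have h := sub_conj z
      push_cast at h
      simp [g]
      linear_combination (-I / 2) * h - (z.im : ℂ) * I_mul_I
  have hF : eval ![z, conj z] (aeval (R := ℝ) g P) = aeval (fun i => eval ![z, conj z] (g i)) P :=
    comp_aeval_apply g ((aeval ![z, conj z]).restrictScalars ℝ) P
  rw [hF, hg, aeval_algebraMap_apply, aeval_eq_eval, ← hP]
  exact (ofReal_re _).symm

lemma IsRealPolyFun.mem_span_reMonomial {p : ℂ → ℝ} (hp : IsRealPolyFun p) :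
    p ∈ Submodule.span ℝ reMonomials := by
  obtain ⟨F, hF⟩ := hp.exists_re_eval
  have hsum : p = ∑ d ∈ F.support, reMonomial (F.coeff d) (d 0) (d 1) := by
    ext z
    simp [hF, eval_eq', Fin.prod_univ_two, reMonomial, re_sum]
  rw [hsum]
  exact Submodule.sum_mem _ fun d _ => Submodule.subset_span ⟨(F.coeff d, d 0, d 1), rfl⟩

section Average

variable {ζ : ℂ} {k : ℕ}

lemma IsPrimitiveRoot.sum_pow_mul_conj_pow (hζ : IsPrimitiveRoot ζ k) (a b : ℕ) :
    ∑ j ∈ range k, (ζ ^ a * conj ζ ^ b) ^ j = if a ≡ b [MOD k] then (k : ℂ) else 0 := by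
  rcases Nat.eq_zero_or_pos k with rfl | hk
  · simp
  have hconj : conj ζ = ζ⁻¹ := (inv_eq_conj (hζ.norm'_eq_one hk.ne')).symm
  have hζ0 : ζ ≠ 0 := hζ.ne_zero hk.ne'
  have hu : ζ ^ a * conj ζ ^ b = 1 ↔ a ≡ b [MOD k] := by
    rw [hconj, inv_pow, ← div_eq_mul_inv, div_eq_one_iff_eq (pow_ne_zero _ hζ0), hζ.eq_orderOf,
      (hζ.isOfFinOrder hk.ne').pow_eq_pow_iff_modEq]
  split_ifs with h
  · simp [hu.mpr h]
  · have huk : (ζ ^ a * conj ζ ^ b) ^ k = 1 := by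
      rw [mul_pow, ← pow_mul, ← pow_mul, mul_comm a, mul_comm b, pow_mul, pow_mul, ← map_pow,
        hζ.pow_eq_one, map_one, one_pow, one_pow, one_mul]
    rw [geom_sum_eq (mt hu.mp h), huk, sub_self, zero_div]

lemma mul_pow_mul_conj_pow (w z : ℂ) (a b : ℕ) :
    (w * z) ^ a * conj (w * z) ^ b = (w ^ a * conj w ^ b) * (z ^ a * conj z ^ b) := by
  rw [map_mul]
  ring

noncomputable def dihedralAverage (ζ : ℂ) (k : ℕ) : (ℂ → ℝ) →ₗ[ℝ] ℂ → ℝ :=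
  (2 * k : ℝ)⁻¹ • ∑ j ∈ range k,
    (LinearMap.funLeft ℝ ℝ (fun z => ζ ^ j * z) +
      LinearMap.funLeft ℝ ℝ (fun z => ζ ^ j * conj z))

lemma dihedralAverage_apply (p : ℂ → ℝ) (z : ℂ) :
    dihedralAverage ζ k p z =
      (2 * k : ℝ)⁻¹ * ∑ j ∈ range k, (p (ζ ^ j * z) + p (ζ ^ j * conj z)) := by
  simp [dihedralAverage, LinearMap.funLeft_apply]

lemma dihedralAverage_eq_self (hk : k ≠ 0) {p : ℂ → ℝ} (hconj : ∀ z, p (conj z) = p z)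
    (hrot : ∀ z, p (ζ * z) = p z) : dihedralAverage ζ k p = p := by
  have hrotpow (j : ℕ) (z : ℂ) : p (ζ ^ j * z) = p z := by
    induction j generalizing z with
    | zero => rw [pow_zero, one_mul]
    | succ j ih => rw [pow_succ, mul_assoc, ih, hrot]
  ext z
  simp only [dihedralAverage_apply, hrotpow, hconj, sum_const, card_range, nsmul_eq_mul]
  field_simp
  ring

lemma dihedralAverage_reMonomial (hk : k ≠ 0) (hζ : IsPrimitiveRoot ζ k) (c : ℂ) (a b : ℕ) :
    dihedralAverage ζ k (reMonomial c a b) =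
      if a ≡ b [MOD k] then reMonomial c.re a b else 0 := by
  ext z
  have hsum :
      ∑ j ∈ range k, (reMonomial c a b (ζ ^ j * z) + reMonomial c a b (ζ ^ j * conj z)) =
      (c * (∑ j ∈ range k, (ζ ^ a * conj ζ ^ b) ^ j) *
        (z ^ a * conj z ^ b + conj (z ^ a * conj z ^ b))).re := by
    rw [mul_sum, sum_mul, re_sum]
    refine sum_congr rfl fun j _ => ?_
    rw [reMonomial, reMonomial, ← add_re, mul_pow_mul_conj_pow, mul_pow_mul_conj_pow]
    simp only [map_mul, map_pow, conj_conj]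
    congr 1
    ring
  rw [dihedralAverage_apply, hsum, hζ.sum_pow_mul_conj_pow, add_conj]
  split_ifs with h
  · have hk' : (k : ℝ) ≠ 0 := Nat.cast_ne_zero.mpr hk
    rw [mul_comm c, re_mul_ofReal, ← ofReal_natCast, re_ofReal_mul, reMonomial, re_ofReal_mul]
    field_simp
  · simp

end Average

noncomputable def normSqRePowAlgebra (k : ℕ) : Subalgebra ℝ (ℂ → ℝ) :=
  (aeval ![fun z => normSq z, fun z => (z ^ k).re]).range

lemma normSq_mem_normSqRePowAlgebra (k : ℕ) : (fun z => normSq z) ∈ normSqRePowAlgebra k :=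
  ⟨X 0, aeval_X _ 0⟩

lemma re_pow_mem_normSqRePowAlgebra (k : ℕ) : (fun z => (z ^ k).re) ∈ normSqRePowAlgebra k :=
  ⟨X 1, aeval_X _ 1⟩

lemma reMonomial_mem_normSqRePowAlgebra {k a b : ℕ} (r : ℝ) (h : a ≡ b [MOD k]) :
    reMonomial r a b ∈ normSqRePowAlgebra k := by
  wlog hba : b ≤ a generalizing a b
  · have hswap : reMonomial r a b = reMonomial r b a := by
      ext z
      rw [reMonomial, reMonomial, ← conj_re, map_mul, map_mul, conj_ofReal, map_pow, map_pow,
        conj_conj, mul_comm (conj z ^ a)]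
    exact hswap ▸ this h.symm (le_of_not_ge hba)
  obtain ⟨q, hq⟩ := (Nat.modEq_iff_dvd' hba).mp h.symm
  obtain rfl : a = b + k * q := by omega
  have hfactor : reMonomial r (b + k * q) b =
      r • ((fun z => normSq z) ^ b * fun z => ((z ^ k) ^ q).re) := by
    ext z
    have hz : z ^ (b + k * q) * conj z ^ b = (normSq z : ℂ) ^ b * (z ^ k) ^ q := by
      rw [← mul_conj]
      ring
    simp only [reMonomial, hz, Pi.smul_apply, Pi.mul_apply, Pi.pow_apply, smul_eq_mul,
      ← ofReal_pow, re_ofReal_mul]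
  have hnormSq_pow : (fun z => normSq (z ^ k)) ∈ normSqRePowAlgebra k := by
    have hpow : (fun z => normSq (z ^ k)) = (fun z => normSq z) ^ k := by
      ext z
      rw [map_pow, Pi.pow_apply]
    exact hpow ▸ (normSqRePowAlgebra k).pow_mem (normSq_mem_normSqRePowAlgebra k) k
  rw [hfactor]
  exact Subalgebra.smul_mem _ (Subalgebra.mul_mem _
    (Subalgebra.pow_mem _ (normSq_mem_normSqRePowAlgebra k) b)
    (re_pow_mem (re_pow_mem_normSqRePowAlgebra k) hnormSq_pow q)) r

lemma dihedralAverage_mem_normSqRePowAlgebra {ζ : ℂ} {k : ℕ} (hk : k ≠ 0)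
    (hζ : IsPrimitiveRoot ζ k) {p : ℂ → ℝ} (hp : p ∈ Submodule.span ℝ reMonomials) :
    dihedralAverage ζ k p ∈ normSqRePowAlgebra k := by
  refine Submodule.span_le (p := Subalgebra.toSubmodule (normSqRePowAlgebra k)).mpr ?_
    (Submodule.apply_mem_span_image_of_mem_span _ hp)
  rintro _ ⟨_, ⟨⟨c, a, b⟩, rfl⟩, rfl⟩
  rw [SetLike.mem_coe, Subalgebra.mem_toSubmodule, dihedralAverage_reMonomial hk hζ]
  split_ifs with h
  · exact reMonomial_mem_normSqRePowAlgebra c.re h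
  · exact Subalgebra.zero_mem _

lemma isDihedralInvariant_iff (k : ℕ) (p : ℂ → ℝ) :
    IsDihedralInvariant k p ↔ (∀ z, p (conj z) = p z) ∧
      ∀ z, p (exp (2 * Real.pi * I / k) * z) = p z := by
  refine and_congr_right fun hconj => ⟨fun hrot z => ?_, fun hrot z => ?_⟩
  · simpa only [conj_conj, hconj] using hrot (conj z)
  · rw [hrot, hconj]

/-- The ring of D_k-invariant real polynomial functions on ℂ contains δ₁(z) = |z|² and
δ₂(z) = Re(z^k), and every invariant polynomial function is a polynomial in δ₁, δ₂. -/
theorem dihedral_invariant_polynomials (k : ℕ) (hk : 0 < k) :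
    (IsRealPolyFun (fun z => Complex.normSq z) ∧
      IsDihedralInvariant k (fun z => Complex.normSq z)) ∧
    (IsRealPolyFun (fun z => (z ^ k).re) ∧
      IsDihedralInvariant k (fun z => (z ^ k).re)) ∧
    (∀ p : ℂ → ℝ, IsRealPolyFun p → IsDihedralInvariant k p →
      ∃ Q : MvPolynomial (Fin 2) ℝ,
        ∀ z : ℂ, p z = MvPolynomial.eval ![Complex.normSq z, (z ^ k).re] Q) := by
  have hζ := isPrimitiveRoot_exp k hk.ne'
  have hre : re ∈ (aeval (R := ℝ) ![re, im]).range := ⟨X 0, aeval_X _ 0⟩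
  have hnormSq : (fun z => normSq z) ∈ (aeval (R := ℝ) ![re, im]).range := by
    refine ⟨X 0 * X 0 + X 1 * X 1, ?_⟩
    ext z
    simp [normSq_apply]
  refine ⟨⟨(isRealPolyFun_iff_mem_range _).mpr hnormSq, ?_⟩,
    ⟨(isRealPolyFun_iff_mem_range _).mpr (re_pow_mem hre hnormSq k), ?_⟩, fun p hp hinv => ?_⟩
  · refine (isDihedralInvariant_iff k _).mpr ⟨normSq_conj, fun z => ?_⟩
    rw [normSq_mul, normSq_eq_norm_sq, hζ.norm'_eq_one hk.ne', one_pow, one_mul]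
  · refine (isDihedralInvariant_iff k _).mpr ⟨fun z => ?_, fun z => ?_⟩
    · rw [← map_pow, conj_re]
    · rw [mul_pow, hζ.pow_eq_one, one_mul]
  obtain ⟨hconj, hrot⟩ := (isDihedralInvariant_iff k p).mp hinv
  rw [← mem_range_aeval_pair_iff, ← dihedralAverage_eq_self hk.ne' hconj hrot]
  exact dihedralAverage_mem_normSqRePowAlgebra hk.ne' hζ hp.mem_span_reMonomial
end

section
/- The map ℂ → ℝ³, z ↦ (Re(z^k), Im(z^k), |z|²), induces a bijection from the set of orbits of the rotation action of ℤ/k on ℂ onto the set C_k = {(s,t,u) ∈ ℝ³ : s² + t² = u^k, u ≥ 0}; that is, two complex numbers z, w have the same image if and only if w = e^{2πij/k}·z for some integer j. -/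
open Complex

/-! Two points have the same `k`-th power exactly when their quotient is a `k`-th root of unity,
i.e. a power of the primitive root `exp (2πi/k)`; and equal `k`-th powers already force equal
moduli, so the third coordinate `|z|²` of the Hilbert map carries no extra information. -/

theorem IsPrimitiveRoot.pow_eq_pow_iff_exists_zpow_mul {K : Type*} [Field K] {k : ℕ} {ζ z w : K}
    (hζ : IsPrimitiveRoot ζ k) (hk : k ≠ 0) : z ^ k = w ^ k ↔ ∃ j : ℤ, w = ζ ^ j * z := by
  constructor
  · intro h
    rcases eq_or_ne z 0 with rfl | hz
    · have hw : w = 0 := (pow_eq_zero_iff hk).mp (by rw [← h, zero_pow hk])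
      exact ⟨0, by rw [hw, mul_zero]⟩
    · have : NeZero k := ⟨hk⟩
      obtain ⟨i, -, hi⟩ := hζ.eq_pow_of_pow_eq_one (ξ := w / z)
        (by rw [div_pow, ← h, div_self (pow_ne_zero k hz)])
      exact ⟨i, by rw [zpow_natCast, hi, div_mul_cancel₀ w hz]⟩
  · rintro ⟨j, rfl⟩
    rw [mul_pow, ← zpow_natCast (ζ ^ j), ← zpow_mul, mul_comm j, zpow_mul, hζ.zpow_eq_one,
      one_zpow, one_mul]

theorem Complex.exp_two_pi_mul_I_mul_int_div (j : ℤ) (k : ℕ) :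
    exp (2 * Real.pi * I * j / k) = exp (2 * Real.pi * I / k) ^ j := by
  rw [← exp_int_mul]
  ring_nf

theorem Complex.normSq_eq_of_pow_eq {k : ℕ} {z w : ℂ} (hk : k ≠ 0) (h : z ^ k = w ^ k) :
    normSq z = normSq w :=
  (pow_left_inj₀ (normSq_nonneg z) (normSq_nonneg w) hk).mp (by rw [← map_pow, h, map_pow])

/-- The Hilbert map z ↦ (Re(z^k), Im(z^k), |z|²) separates the orbits of the rotation
action of ℤ/k on ℂ: two points have the same image iff they differ by a k-th root of
unity. -/
theorem hilbert_map_separates_orbits_cyclic (k : ℕ) (hk : 0 < k) (z w : ℂ) :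
    ((z ^ k).re, (z ^ k).im, Complex.normSq z) =
        ((w ^ k).re, (w ^ k).im, Complex.normSq w) ↔
      ∃ j : ℤ, w = Complex.exp (2 * Real.pi * Complex.I * j / k) * z := by
  simp only [exp_two_pi_mul_I_mul_int_div,
    ← (isPrimitiveRoot_exp k hk.ne').pow_eq_pow_iff_exists_zpow_mul hk.ne']
  rw [Prod.mk.injEq, Prod.mk.injEq, ← and_assoc, ← Complex.ext_iff]
  exact and_iff_left_of_imp (normSq_eq_of_pow_eq hk.ne')
end

section
/- The image of the map ℂ → ℝ² given by z ↦ (|z|², Re(z^k)) is exactly the set R_k = {(s,t) ∈ ℝ² : t² ≤ s^k, s ≥ 0}. -/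
/-! Since `normSq` is multiplicative, `Re(z^k)² ≤ normSq (z^k) = (normSq z)^k`. Conversely, given
`t² ≤ s^k`, the point `w = t + i√(s^k - t²)` has real part `t` and `normSq w = s^k`; any `k`-th root
`z` of `w` then satisfies `(normSq z)^k = s^k`, hence `normSq z = s`. -/

namespace Complex

theorem sq_re_pow_le_normSq_pow (z : ℂ) (k : ℕ) : (z ^ k).re ^ 2 ≤ normSq z ^ k := by
  rw [sq, ← map_pow]
  exact re_sq_le_normSq (z ^ k)

theorem exists_normSq_eq_re_eq {s t : ℝ} (h : t ^ 2 ≤ s) : ∃ w : ℂ, normSq w = s ∧ w.re = t := by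
  refine ⟨⟨t, √(s - t ^ 2)⟩, ?_, rfl⟩
  rw [normSq_mk, ← sq, ← sq, Real.sq_sqrt (sub_nonneg.mpr h)]
  ring

end Complex

/-- The image of the Hilbert map z ↦ (|z|², Re(z^k)) for the dihedral action of D_k on ℂ
is exactly R_k = {(s,t) : t² ≤ s^k, s ≥ 0}. -/
theorem hilbert_map_image_dihedral (k : ℕ) (hk : 0 < k) :
    Set.range (fun z : ℂ => (Complex.normSq z, (z ^ k).re)) =
      {p : ℝ × ℝ | p.2 ^ 2 ≤ p.1 ^ k ∧ 0 ≤ p.1} := by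
  ext ⟨s, t⟩
  simp only [Set.mem_range, Set.mem_ofPred_eq, Prod.mk.injEq]
  constructor
  · rintro ⟨z, rfl, rfl⟩
    exact ⟨Complex.sq_re_pow_le_normSq_pow z k, Complex.normSq_nonneg z⟩
  · rintro ⟨hts, hs⟩
    obtain ⟨w, hw, rfl⟩ := Complex.exists_normSq_eq_re_eq hts
    obtain ⟨z, rfl⟩ := IsAlgClosed.exists_pow_nat_eq w hk
    rw [map_pow, pow_left_inj₀ (Complex.normSq_nonneg z) hs hk.ne'] at hw
    exact ⟨z, hw, rfl⟩
end

section
/- Two complex numbers z, w satisfy (|z|², Re(z^k)) = (|w|², Re(w^k)) if and only if w lies in the D_k-orbit of z, where D_k is generated by z ↦ conj(z) and z ↦ e^{2πi/k}·conj(z). -/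
/-!
Equal `|z|²` and equal `Re (z ^ k)` mean that `z ^ k` and `w ^ k` have the same modulus and the
same real part, hence `w ^ k` is `z ^ k` or its conjugate `(conj z) ^ k`. Two numbers with equal
`k`-th powers differ by a `k`-th root of unity, and these are the `exp (2πij/k)`.
-/

open Complex Real ComplexConjugate

namespace Complex

lemma eq_or_eq_conj_of_normSq_eq_of_re_eq {u v : ℂ} (hn : normSq v = normSq u)
    (hre : v.re = u.re) : v = u ∨ v = conj u := by
  have him : v.im ^ 2 = u.im ^ 2 := by
    rw [normSq_apply, normSq_apply, hre] at hn
    linear_combination hn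
  rcases sq_eq_sq_iff_eq_or_eq_neg.mp him with him | him
  · exact .inl (Complex.ext hre him)
  · exact .inr (Complex.ext (by rw [conj_re, hre]) (by rw [conj_im, him]))

lemma pow_eq_one_iff_exists_exp {k : ℕ} (hk : k ≠ 0) {ζ : ℂ} :
    ζ ^ k = 1 ↔ ∃ j : ℤ, ζ = exp (2 * π * I * j / k) := by
  constructor
  · intro h
    have : NeZero k := ⟨hk⟩
    obtain ⟨i, -, rfl⟩ := (isPrimitiveRoot_exp k hk).eq_pow_of_pow_eq_one h
    refine ⟨i, ?_⟩
    rw [← exp_nat_mul]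
    push_cast
    ring_nf
  · rintro ⟨j, rfl⟩
    rw [← exp_nat_mul, show (k : ℂ) * (2 * π * I * j / k) = j * (2 * π * I) by field_simp]
    exact exp_int_mul_two_pi_mul_I j

lemma normSq_mul_of_pow_eq_one {k : ℕ} (hk : k ≠ 0) {ζ : ℂ} (hζ : ζ ^ k = 1) (u : ℂ) :
    normSq (ζ * u) = normSq u := by
  rw [normSq_mul, normSq_eq_norm_sq, norm_eq_one_of_pow_eq_one hζ hk, one_pow, one_mul]

end Complex

lemma exists_pow_eq_one_mul_of_pow_eq_pow {M₀ : Type*} [CommGroupWithZero M₀] {k : ℕ}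
    (hk : k ≠ 0) {u v : M₀} (h : v ^ k = u ^ k) : ∃ ζ : M₀, ζ ^ k = 1 ∧ v = ζ * u := by
  rcases eq_or_ne u 0 with rfl | hu
  · exact ⟨1, one_pow k, by simpa [zero_pow hk, pow_eq_zero_iff hk] using h⟩
  · exact ⟨v / u, by rw [div_pow, h, div_self (pow_ne_zero k hu)], (div_mul_cancel₀ v hu).symm⟩

/-- The map z ↦ (|z|², Re(z^k)) separates the orbits of the dihedral group D_k
(generated by z ↦ conj z and z ↦ e^{2πi/k}·conj z) acting on ℂ: two points have the same
image iff one is obtained from the other by a rotation by a k-th root of unity, possibly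
composed with conjugation. -/
theorem hilbert_map_separates_orbits_dihedral (k : ℕ) (hk : 0 < k) (z w : ℂ) :
    (Complex.normSq z, (z ^ k).re) = (Complex.normSq w, (w ^ k).re) ↔
      ∃ j : ℤ, w = Complex.exp (2 * Real.pi * Complex.I * j / k) * z ∨
        w = Complex.exp (2 * Real.pi * Complex.I * j / k) * (starRingEnd ℂ) z := by
  simp only [Prod.mk.injEq]
  constructor
  · rintro ⟨hn, hre⟩
    have hpow : w ^ k = z ^ k ∨ w ^ k = conj z ^ k := by
      rw [← map_pow]
      exact eq_or_eq_conj_of_normSq_eq_of_re_eq (by rw [map_pow, map_pow, hn]) hre.symm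
    obtain ⟨u, hu, hwu⟩ : ∃ u, (u = z ∨ u = conj z) ∧ w ^ k = u ^ k := by
      rcases hpow with h | h
      exacts [⟨z, .inl rfl, h⟩, ⟨conj z, .inr rfl, h⟩]
    obtain ⟨ζ, hζ, rfl⟩ := exists_pow_eq_one_mul_of_pow_eq_pow hk.ne' hwu
    obtain ⟨j, rfl⟩ := (pow_eq_one_iff_exists_exp hk.ne').1 hζ
    exact ⟨j, hu.imp (congrArg _) (congrArg _)⟩
  · rintro ⟨j, hw⟩
    have hζ := (pow_eq_one_iff_exists_exp hk.ne').2 ⟨j, rfl⟩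
    rcases hw with rfl | rfl <;>
      simp only [normSq_mul_of_pow_eq_one hk.ne' hζ, mul_pow, hζ, one_mul, normSq_conj,
        ← map_pow, conj_re, and_self]
end
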